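/- Let E ⊂ X × X be a Lebesgue-measurable set. Then for every ε > 0 there exists δ₀ > 0 such that for all δ ∈ (0,δ₀), the Lebesgue measure in ℝ^{2m} satisfies λ^{2m}((S_δ × S_δᶜ) ∩ E) ≥ (1/4 − ε) · λ^{2m}(E), where S_δᶜ = ℝ^m \ S_δ. -/

import Mathlib

open MeasureTheory ENNReal Filter Topology

/-- The checkerboard pattern `S_δ ⊆ ℝ^m`: the union of the open cubes of side length `δ`
centred at the points `δ·x` for `x ∈ ℤ^m` with `∑ j, x j` even. -/
def checkerboard (m : ℕ) (δ : ℝ) : Set (Fin m → ℝ) :=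
  ⋃ x ∈ {x : Fin m → ℤ | Even (∑ j, x j)},
    Set.univ.pi fun j => Set.Ioo ((x j : ℝ) * δ - δ / 2) ((x j : ℝ) * δ + δ / 2)

/-!
Write `S = S_δ`, `v = δ e₀` and `T = S - v`. Moving a cube of the checkerboard by one step
changes the parity of its index, so `T ⊆ Sᶜ`; and every point off the hyperplanes
`z j ∈ δ (ℤ + 1/2)` lies in an open cube, of `S` or of `T` according to the parity of its index,
so `S ∪ T` has full measure. Hence, up to a null set, `ℝ^m × ℝ^m` is covered by the four
translates of `S × T` by the shifts `(0 or v, 0 or -v)`, all of size at most `δ`. Since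
`w ↦ λ((E - w) ∆ E)` is continuous at `0`, for small `δ` each of the four translates meets `E`
in measure at most `λ((S × T) ∩ E) + ε λ(E)`, whence `λ(E) ≤ 4 (λ((S × T) ∩ E) + ε λ(E))`.
-/

open scoped symmDiff

section Translation

variable {G : Type*} [AddGroup G] [MeasurableSpace G] {μ : Measure G}

theorem measure_preimage_add_inter_le [MeasurableAdd G] [μ.IsAddRightInvariant]
    (A E : Set G) (w : G) :
    μ ((· + w) ⁻¹' A ∩ E) ≤ μ (A ∩ E) + μ (((· + w) ⁻¹' E) ∆ E) := by
  calc μ ((· + w) ⁻¹' A ∩ E)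
      ≤ μ ((· + w) ⁻¹' (A ∩ E) ∪ (((· + w) ⁻¹' E) ∆ E)) := by
        refine measure_mono fun p ⟨hpA, hpE⟩ => ?_
        by_cases hp : p + w ∈ E
        · exact Or.inl ⟨hpA, hp⟩
        · exact Or.inr (Or.inr ⟨hpE, hp⟩)
    _ ≤ μ (A ∩ E) + μ (((· + w) ⁻¹' E) ∆ E) := by
        grw [measure_union_le, measure_preimage_add_right]

theorem measure_le_card_mul_of_ae_exists_add_mem [MeasurableAdd G] [μ.IsAddRightInvariant]
    {ι : Type*} [Fintype ι] {A E : Set G} {w : ι → G} {η : ℝ≥0∞}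
    (hcover : ∀ᵐ p ∂μ, ∃ i, p + w i ∈ A) (hw : ∀ i, μ (((· + w i) ⁻¹' E) ∆ E) ≤ η) :
    μ E ≤ Fintype.card ι * (μ (A ∩ E) + η) := by
  calc μ E ≤ μ (⋃ i, (· + w i) ⁻¹' A ∩ E) := by
        refine measure_mono_ae ?_
        filter_upwards [hcover] with p ⟨i, hi⟩ hp
        exact Set.mem_iUnion.2 ⟨i, hi, hp⟩
    _ ≤ ∑ i, μ ((· + w i) ⁻¹' A ∩ E) := measure_iUnion_fintype_le _ _
    _ ≤ ∑ _i : ι, (μ (A ∩ E) + η) := by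
        gcongr with i
        grw [measure_preimage_add_inter_le, hw]
    _ = Fintype.card ι * (μ (A ∩ E) + η) := by
        rw [Finset.sum_const, Finset.card_univ, nsmul_eq_mul]

theorem tendsto_measure_preimage_add_symmDiff [TopologicalSpace G] [IsTopologicalAddGroup G]
    [BorelSpace G] [μ.IsAddRightInvariant] [μ.InnerRegularCompactLTTop]
    [IsLocallyFiniteMeasure μ] {E : Set G} (hE : NullMeasurableSet E μ) (hμE : μ E ≠ ∞) :
    Tendsto (fun w => μ (((· + w) ⁻¹' E) ∆ E)) (𝓝 0) (𝓝 0) := by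
  let f : G → C(G, G) := fun w => ⟨(· + w), continuous_add_const w⟩
  have hf : Tendsto f (𝓝 0) (𝓝 (ContinuousMap.id G)) := by
    have hcont : Continuous f :=
      ContinuousMap.continuous_of_continuous_uncurry _ (continuous_snd.add continuous_fst)
    have hf0 : f 0 = ContinuousMap.id G := ContinuousMap.ext add_zero
    exact hf0 ▸ hcont.tendsto 0
  exact (tendsto_measure_symmDiff_preimage_nhds_zero hf
    (.of_forall fun w => measurePreserving_add_right μ w) (.id μ) hE hμE :)

theorem ae_exists_add_mem_prod_preimage_add [SFinite μ] {S : Set G} {v : G}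
    (h : ∀ᵐ x ∂μ, x ∈ S ∨ x + v ∈ S) :
    ∀ᵐ p ∂μ.prod μ, ∃ k : Fin 2 × Fin 2,
      p + ((k.1 : ℕ) • v, -((k.2 : ℕ) • v)) ∈ S ×ˢ ((· + v) ⁻¹' S) := by
  filter_upwards [Measure.quasiMeasurePreserving_fst.ae h,
    Measure.quasiMeasurePreserving_snd.ae h] with p h₁ h₂
  obtain ⟨i, hi⟩ : ∃ i : Fin 2, p.1 + (i : ℕ) • v ∈ S := by
    rcases h₁ with h₁ | h₁
    · exact ⟨0, by simpa using h₁⟩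
    · exact ⟨1, by simpa using h₁⟩
  obtain ⟨j, hj⟩ : ∃ j : Fin 2, p.2 + -((j : ℕ) • v) + v ∈ S := by
    rcases h₂ with h₂ | h₂
    · exact ⟨1, by simpa using h₂⟩
    · exact ⟨0, by simpa using h₂⟩
  exact ⟨(i, j), hi, hj⟩

end Translation

theorem ENNReal.ofReal_sub_mul_le_of_le_mul_add {n : ℕ} (hn : 0 < n) {a e : ℝ≥0∞} {ε : ℝ}
    (hε : 0 ≤ ε) (he : e ≠ ∞) (h : e ≤ n * (a + ENNReal.ofReal ε * e)) :
    ENNReal.ofReal (1 / n - ε) * e ≤ a := by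
  rcases eq_or_ne a ∞ with rfl | ha
  · exact le_top
  rw [← ENNReal.ofReal_toReal he, ← ENNReal.ofReal_mul' ENNReal.toReal_nonneg,
    ENNReal.ofReal_le_iff_le_toReal ha]
  have h' := ENNReal.toReal_mono (by finiteness) h
  rw [ENNReal.toReal_mul, ENNReal.toReal_add ha (by finiteness), ENNReal.toReal_mul,
    ENNReal.toReal_ofReal hε, ENNReal.toReal_natCast, ← div_le_iff₀' (by positivity)] at h'
  linarith [show (1 / n - ε) * e.toReal = e.toReal / n - ε * e.toReal by ring]

theorem sum_add_single {ι M : Type*} [Fintype ι] [DecidableEq ι] [AddCommMonoid M]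
    (x : ι → M) (i : ι) (a : M) : ∑ j, (x + Pi.single i a : ι → M) j = ∑ j, x j + a := by
  simp [Finset.sum_add_distrib]

section Checkerboard

variable {m : ℕ} {δ : ℝ}

theorem mem_checkerboard {z : Fin m → ℝ} :
    z ∈ checkerboard m δ ↔ ∃ x : Fin m → ℤ, Even (∑ j, x j) ∧ ∀ j, |z j - x j * δ| < δ / 2 := by
  simp only [checkerboard, Set.mem_iUnion, Set.mem_pi, Set.mem_Ioo, Set.mem_ofPred_eq,
    Set.mem_univ, true_imp_iff, exists_prop, abs_sub_lt_iff]
  refine exists_congr fun x => and_congr_right fun _ => forall_congr' fun j => ?_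
  constructor <;> rintro ⟨h₁, h₂⟩ <;> constructor <;> linarith

theorem eq_of_abs_sub_mul_lt (hδ : 0 < δ) {a b : ℤ} {t : ℝ} (ha : |t - a * δ| < δ / 2)
    (hb : |t - b * δ| < δ / 2) : a = b := by
  have hab : |((a - b : ℤ) : ℝ)| * δ < 1 * δ := by
    calc |((a - b : ℤ) : ℝ)| * δ = |(t - b * δ) - (t - a * δ)| := by
          rw [← abs_of_pos hδ, ← abs_mul, abs_of_pos hδ]; push_cast; ring_nf
      _ < 1 * δ := by linarith [abs_sub (t - b * δ) (t - a * δ)]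
  have hab' := lt_of_mul_lt_mul_right hab hδ.le
  rw [← Int.cast_abs, ← Int.cast_one, Int.cast_lt, Int.abs_lt_one_iff] at hab'
  omega

theorem abs_sub_round_mul_lt (hδ : 0 < δ) {t : ℝ} (ht : ∀ k : ℤ, t ≠ (k + 1 / 2) * δ) :
    |t - round (t / δ) * δ| < δ / 2 := by
  set r := round (t / δ)
  have hne : |t / δ - r| ≠ 1 / 2 := by
    intro h
    rcases (abs_eq (by norm_num)).1 h with h | h
    · exact ht r (by field_simp at h ⊢; linarith)
    · exact ht (r - 1) (by push_cast; field_simp at h ⊢; linarith)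
  have hlt := lt_of_le_of_ne (abs_sub_round (t / δ)) hne
  calc |t - r * δ| = |t / δ - r| * δ := by
        rw [← abs_of_pos hδ, ← abs_mul, abs_of_pos hδ, sub_mul, div_mul_cancel₀ _ hδ.ne']
    _ < 1 / 2 * δ := by gcongr
    _ = δ / 2 := by ring

theorem abs_add_single_sub_mul (z : Fin m → ℝ) (x : Fin m → ℤ) (i j : Fin m) :
    |(z + Pi.single i δ : Fin m → ℝ) j - ((x + Pi.single i 1 : Fin m → ℤ) j : ℝ) * δ| =
      |z j - x j * δ| := by
  by_cases h : j = i
  · subst h; simp only [Pi.add_apply, Pi.single_eq_same]; push_cast; ring_nf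
  · simp [h]

theorem disjoint_checkerboard_preimage_add_single (hδ : 0 < δ) (i : Fin m) :
    Disjoint (checkerboard m δ) ((· + Pi.single i δ) ⁻¹' checkerboard m δ) := by
  refine Set.disjoint_left.2 fun z hz hz' => ?_
  obtain ⟨x, hx, hxz⟩ := mem_checkerboard.1 hz
  obtain ⟨y, hy, hyz⟩ := mem_checkerboard.1 hz'
  have hxy : y = x + Pi.single i 1 := funext fun j =>
    eq_of_abs_sub_mul_lt hδ (hyz j) ((abs_add_single_sub_mul z x i j).trans_lt (hxz j))
  rw [hxy, sum_add_single, Int.even_add_one] at hy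
  exact hy hx

theorem ae_mem_checkerboard_or_add_single_mem (hδ : 0 < δ) (i : Fin m) :
    ∀ᵐ z, z ∈ checkerboard m δ ∨ z + Pi.single i δ ∈ checkerboard m δ := by
  have hgen : ∀ᵐ z : Fin m → ℝ, ∀ j, ∀ k : ℤ, z j ≠ (k + 1 / 2) * δ := by
    simp only [ae_all_iff]
    exact fun j k => measure_eq_zero_iff_ae_notMem.1 (Measure.pi_hyperplane _ j _)
  filter_upwards [hgen] with z hz
  set x : Fin m → ℤ := fun j => round (z j / δ)
  have hxz : ∀ j, |z j - x j * δ| < δ / 2 := fun j => abs_sub_round_mul_lt hδ (hz j)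
  rcases Int.even_or_odd (∑ j, x j) with hx | hx
  · exact Or.inl (mem_checkerboard.2 ⟨x, hx, hxz⟩)
  · refine Or.inr (mem_checkerboard.2 ⟨x + Pi.single i 1, ?_, fun j =>
      (abs_add_single_sub_mul z x i j).trans_lt (hxz j)⟩)
    rw [sum_add_single]
    exact hx.add_one

end Checkerboard

theorem stmt_18_general (m : ℕ) (hm : 0 < m)
    (X : Set (Fin m → ℝ)) (hXbdd : Bornology.IsBounded X)
    (E : Set ((Fin m → ℝ) × (Fin m → ℝ))) (hE : MeasurableSet E) (hEX : E ⊆ X ×ˢ X) :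
    ∀ ε : ℝ, 0 < ε → ∃ δ₀ : ℝ, 0 < δ₀ ∧ ∀ δ : ℝ, 0 < δ → δ < δ₀ →
      ENNReal.ofReal (1 / 4 - ε) * volume E ≤
        volume ((checkerboard m δ ×ˢ (checkerboard m δ)ᶜ) ∩ E) := by
  intro ε hε
  rw [Measure.volume_eq_prod]
  set μ : Measure ((Fin m → ℝ) × (Fin m → ℝ)) := volume.prod volume
  have hEfin : μ E ≠ ∞ := ((hXbdd.prod hXbdd).subset hEX).measure_lt_top.ne
  rcases eq_or_ne (μ E) 0 with hE0 | hE0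
  · exact ⟨1, one_pos, fun _ _ _ => by simp [hE0]⟩
  let i : Fin m := ⟨0, hm⟩
  let w : ℝ → Fin 2 × Fin 2 → (Fin m → ℝ) × (Fin m → ℝ) := fun δ k =>
    ((k.1 : ℕ) • Pi.single i δ, -((k.2 : ℕ) • Pi.single i δ))
  have hsingle : Continuous fun δ : ℝ => (Pi.single i δ : Fin m → ℝ) :=
    continuous_single (A := fun _ => ℝ) i
  have hsmall : ∀ᶠ δ in 𝓝 0, ∀ k, μ (((· + w δ k) ⁻¹' E) ∆ E) ≤ ENNReal.ofReal ε * μ E := by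
    refine eventually_all.2 fun k => ?_
    have hw : Tendsto (w · k) (𝓝 0) (𝓝 0) := by
      have hcont : Continuous (w · k) := by simp only [w]; fun_prop
      simpa [w, Prod.mk_zero_zero] using hcont.tendsto 0
    refine (((tendsto_measure_preimage_add_symmDiff hE.nullMeasurableSet hEfin).comp hw)
      |>.eventually_lt_const ?_).mono fun _ => le_of_lt
    exact ENNReal.mul_pos (ENNReal.ofReal_pos.2 hε).ne' hE0
  obtain ⟨δ₀, hδ₀, hδ₀small⟩ := Metric.eventually_nhds_iff.1 hsmall
  refine ⟨δ₀, hδ₀, fun δ hδ hδδ₀ => ?_⟩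
  set S := checkerboard m δ
  have hcount := measure_le_card_mul_of_ae_exists_add_mem
    (ae_exists_add_mem_prod_preimage_add (ae_mem_checkerboard_or_add_single_mem hδ i))
    (hδ₀small (by simpa [abs_of_pos hδ] using hδδ₀))
  calc ENNReal.ofReal (1 / 4 - ε) * μ E ≤ μ ((S ×ˢ ((· + Pi.single i δ) ⁻¹' S)) ∩ E) :=
        ofReal_sub_mul_le_of_le_mul_add (n := 4) four_pos hε.le hEfin (by simpa using hcount)
    _ ≤ μ ((S ×ˢ Sᶜ) ∩ E) := measure_mono (Set.inter_subset_inter_left _ (Set.prod_mono le_rfl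
        (disjoint_checkerboard_preimage_add_single hδ i).subset_compl_left))

theorem stmt_18 (m : ℕ) (hm : 0 < m)
    (X : Set (Fin m → ℝ)) (hXmeas : MeasurableSet X) (hXbdd : Bornology.IsBounded X)
    (E : Set ((Fin m → ℝ) × (Fin m → ℝ))) (hE : MeasurableSet E) (hEX : E ⊆ X ×ˢ X) :
    ∀ ε : ℝ, 0 < ε → ∃ δ₀ : ℝ, 0 < δ₀ ∧ ∀ δ : ℝ, 0 < δ → δ < δ₀ →
      ENNReal.ofReal (1 / 4 - ε) * volume E ≤
        volume ((checkerboard m δ ×ˢ (checkerboard m δ)ᶜ) ∩ E) :=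
  stmt_18_general m hm X hXbdd E hE hEX
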